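/- arXiv:1506.07420 — 2 statements merged into one kernel-verified Lean document; each statement's English description precedes it below -/
import Mathlib

section
/- Let F : ℝ → ℝ be integrable and continuously differentiable, and let k(x) = e^(2ix)·( 1 + (1/2)·sech²(x/√2) + i·√2·tanh(x/√2) ). Define G : ℝ → ℝ by G(x) = (1/12)·Im( k(x)·∫_{-∞}^{x} conj(k(y))·F(y) dy + conj(k(x))·∫_{x}^{+∞} k(y)·F(y) dy ). Then G is bounded, twice continuously differentiable, and satisfies G''(x) + 4·G(x) + 3·sech²(x/√2)·G(x) = F(x) for all real x. -/
/-!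
`kJost` and its conjugate solve the homogeneous equation `u'' + (4 + 3 sech² (x/√2)) u = 0`, and
their Wronskian `k' k̄ - k̄' k` is the constant `12 i`. Hence for
`H = k ∫_{-∞}^x k̄ F + k̄ ∫_x^∞ k F` the boundary terms cancel in `H' = k' ∫ k̄ F + k̄' ∫ k F`, and
`H'' = -(4 + 3 sech²) H + 12 i F`; taking `Im H / 12` gives the equation for `G`. Boundedness comes
from `‖k‖ ≤ 2` and `F ∈ L¹`, and `G'' = F - (4 + 3 sech²) G` is continuous, so `G` is `C²`.
-/

open MeasureTheory

noncomputable def sech (x : ℝ) : ℝ := 1 / Real.cosh x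

noncomputable def kJost (x : ℝ) : ℂ :=
  Complex.exp (2 * Complex.I * (x : ℂ)) *
    (1 + ((1 / 2 * sech (x / Real.sqrt 2) ^ 2 : ℝ) : ℂ)
      + Complex.I * (Real.sqrt 2 : ℂ) * ((Real.tanh (x / Real.sqrt 2) : ℝ) : ℂ))

open Set Complex ComplexConjugate

section HalfLineIntegral

variable {E : Type*} [NormedAddCommGroup E] [NormedSpace ℝ E] [CompleteSpace E] {f : ℝ → E}

theorem hasDerivAt_setIntegral_Iic (hfi : Integrable f) (hfc : Continuous f) (x : ℝ) :
    HasDerivAt (fun u => ∫ y in Iic u, f y) (f x) x := by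
  have h : (fun u => ∫ y in Iic u, f y) = fun u => (∫ y in Iic 0, f y) + ∫ y in 0..u, f y := by
    funext u
    rw [← intervalIntegral.integral_Iic_sub_Iic hfi.integrableOn hfi.integrableOn]
    abel
  rw [h]
  exact (hfc.integral_hasStrictDerivAt 0 x).hasDerivAt.const_add _

theorem hasDerivAt_setIntegral_Ici (hfi : Integrable f) (hfc : Continuous f) (x : ℝ) :
    HasDerivAt (fun u => ∫ y in Ici u, f y) (-f x) x := by
  have h : (fun u => ∫ y in Ici u, f y) = fun u => (∫ y, f y) - ∫ y in Iic u, f y := by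
    funext u
    rw [integral_Ici_eq_integral_Ioi, ← integral_add_compl measurableSet_Iic hfi, compl_Iic]
    abel
  rw [h]
  exact (hasDerivAt_setIntegral_Iic hfi hfc x).const_sub _

end HalfLineIntegral

section VariationOfParameters

variable {k : ℝ → ℂ} {F : ℝ → ℝ} {C : ℝ}

-- The variation-of-parameters formula is `vpIntegral k k F`; freeing the outer factor `u` lets
-- one lemma compute both derivatives, since only `u` is differentiated beyond a boundary term.
noncomputable def vpIntegral (k u : ℝ → ℂ) (F : ℝ → ℝ) (x : ℝ) : ℂ :=
  u x * (∫ y in Iic x, conj (k y) * F y) + conj (u x) * ∫ y in Ici x, k y * F y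

theorem integrable_mul_ofReal (hkc : Continuous k) (hkC : ∀ x, ‖k x‖ ≤ C) (hF : Integrable F) :
    Integrable fun y => k y * F y :=
  hF.ofReal.bdd_mul hkc.aestronglyMeasurable (ae_of_all _ hkC)

theorem norm_setIntegral_mul_ofReal_le (hkc : Continuous k) (hkC : ∀ x, ‖k x‖ ≤ C)
    (hF : Integrable F) (s : Set ℝ) :
    ‖∫ y in s, k y * F y‖ ≤ C * ∫ y, |F y| := by
  have hkF := integrable_mul_ofReal hkc hkC hF
  calc ‖∫ y in s, k y * F y‖ ≤ ∫ y in s, ‖k y * F y‖ := norm_integral_le_integral_norm _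
    _ ≤ ∫ y, ‖k y * F y‖ := setIntegral_le_integral hkF.norm (ae_of_all _ fun _ => norm_nonneg _)
    _ ≤ ∫ y, C * |F y| := integral_mono hkF.norm (hF.abs.const_mul C) fun y => by
        simpa [norm_mul] using mul_le_mul_of_nonneg_right (hkC y) (abs_nonneg (F y))
    _ = C * ∫ y, |F y| := integral_const_mul C _

theorem norm_vpIntegral_le (hkc : Continuous k) (hkC : ∀ x, ‖k x‖ ≤ C) (hF : Integrable F)
    (x : ℝ) : ‖vpIntegral k k F x‖ ≤ 2 * C ^ 2 * ∫ y, |F y| := by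
  have hC : 0 ≤ C := (norm_nonneg _).trans (hkC 0)
  have hkc' : Continuous fun y => conj (k y) := Complex.continuous_conj.comp hkc
  have hkC' : ∀ x, ‖conj (k x)‖ ≤ C := fun x => (RCLike.norm_conj _).trans_le (hkC x)
  have hA := norm_setIntegral_mul_ofReal_le hkc' hkC' hF (Iic x)
  have hB := norm_setIntegral_mul_ofReal_le hkc hkC hF (Ici x)
  calc ‖vpIntegral k k F x‖
      ≤ ‖k x‖ * ‖∫ y in Iic x, conj (k y) * F y‖ + ‖k x‖ * ‖∫ y in Ici x, k y * F y‖ :=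
        (norm_add_le _ _).trans_eq (by rw [norm_mul, norm_mul, RCLike.norm_conj])
    _ ≤ C * (C * ∫ y, |F y|) + C * (C * ∫ y, |F y|) := by gcongr <;> exact hkC x
    _ = 2 * C ^ 2 * ∫ y, |F y| := by ring

theorem hasDerivAt_vpIntegral {u du : ℝ → ℂ} {x : ℝ} (hkc : Continuous k)
    (hkC : ∀ x, ‖k x‖ ≤ C) (hFi : Integrable F) (hFc : Continuous F)
    (hu : HasDerivAt u (du x) x) :
    HasDerivAt (vpIntegral k u F)
      (vpIntegral k du F x + (u x * conj (k x) - conj (u x) * k x) * F x) x := by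
  have hkc' : Continuous fun y => conj (k y) := Complex.continuous_conj.comp hkc
  have hkC' : ∀ x, ‖conj (k x)‖ ≤ C := fun x => (RCLike.norm_conj _).trans_le (hkC x)
  have hA := hasDerivAt_setIntegral_Iic
    (integrable_mul_ofReal hkc' hkC' hFi) (by fun_prop) x
  have hB := hasDerivAt_setIntegral_Ici (integrable_mul_ofReal hkc hkC hFi) (by fun_prop) x
  have hu' : HasDerivAt (fun y => conj (u y)) (conj (du x)) x := hu.star
  exact ((hu.mul hA).add (hu'.mul hB)).congr_deriv (by simp only [vpIntegral]; ring)

end VariationOfParameters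

theorem contDiff_two_of_hasDerivAt {𝕜 E : Type*} [NontriviallyNormedField 𝕜]
    [NormedAddCommGroup E] [NormedSpace 𝕜 E] {f f' f'' : 𝕜 → E}
    (hf : ∀ x, HasDerivAt f (f' x) x) (hf' : ∀ x, HasDerivAt f' (f'' x) x)
    (hf'' : Continuous f'') : ContDiff 𝕜 2 f := by
  have hderiv : deriv f = f' := funext fun x => (hf x).deriv
  rw [show (2 : WithTop ℕ∞) = 1 + 1 from rfl, contDiff_succ_iff_deriv, hderiv,
    contDiff_one_iff_deriv, funext fun x => (hf' x).deriv]
  exact ⟨fun x => (hf x).differentiableAt, by simp, fun x => (hf' x).differentiableAt, hf''⟩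

theorem HasDerivAt.im {f : ℝ → ℂ} {f' : ℂ} {x : ℝ} (hf : HasDerivAt f f' x) :
    HasDerivAt (fun x => (f x).im) f'.im x :=
  Complex.imCLM.hasFDerivAt.comp_hasDerivAt x hf

theorem vpIntegral_solves {k dk : ℝ → ℂ} {V F G : ℝ → ℝ} {C c : ℝ}
    (hk : ∀ x, HasDerivAt k (dk x) x) (hdk : ∀ x, HasDerivAt dk (-V x * k x) x)
    (hW : ∀ x, dk x * conj (k x) - conj (dk x) * k x = c * I) (hc : c ≠ 0)
    (hkC : ∀ x, ‖k x‖ ≤ C) (hV : Continuous V) (hFi : Integrable F) (hFc : Continuous F)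
    (hG : ∀ x, G x = 1 / c * (vpIntegral k k F x).im) :
    (∃ M, ∀ x, |G x| ≤ M) ∧ ContDiff ℝ 2 G ∧ ∀ x, deriv (deriv G) x + V x * G x = F x := by
  have hkc : Continuous k := continuous_iff_continuousAt.2 fun x => (hk x).continuousAt
  have hG' : G = fun x => 1 / c * (vpIntegral k k F x).im := funext hG
  have hG1 : ∀ x, HasDerivAt G (1 / c * (vpIntegral k dk F x).im) x := by
    intro x
    have h := hasDerivAt_vpIntegral hkc hkC hFi hFc (hk x)
    rw [hG']
    exact ((h.congr_deriv (by ring)).im).const_mul _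
  have hG2 : ∀ x, HasDerivAt (fun x => 1 / c * (vpIntegral k dk F x).im) (F x - V x * G x) x := by
    intro x
    have h := hasDerivAt_vpIntegral (du := fun y => -V y * k y) hkc hkC hFi hFc (hdk x)
    have hscale :
        vpIntegral k (fun y => -V y * k y) F x = ((-V x : ℝ) : ℂ) * vpIntegral k k F x := by
      simp only [vpIntegral, map_mul, map_neg, conj_ofReal]
      push_cast
      ring
    refine (h.im.const_mul (1 / c)).congr_deriv ?_
    rw [hscale, hW x, hG x, add_im, im_ofReal_mul, mul_assoc, im_ofReal_mul, I_mul_im, ofReal_re]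
    field_simp
    ring
  have hGc : Continuous G := continuous_iff_continuousAt.2 fun x => (hG1 x).continuousAt
  refine ⟨⟨|1 / c| * (2 * C ^ 2 * ∫ y, |F y|), fun x => ?_⟩,
    contDiff_two_of_hasDerivAt hG1 hG2 (by fun_prop), fun x => ?_⟩
  · rw [hG x, abs_mul]
    exact mul_le_mul_of_nonneg_left ((abs_im_le_norm _).trans (norm_vpIntegral_le hkc hkC hFi x))
      (abs_nonneg _)
  · rw [show deriv G = _ from funext fun x => (hG1 x).deriv, (hG2 x).deriv]
    ring

theorem HasDerivAt.cexp_mul {P : ℝ → ℂ} {P' a : ℂ} {x : ℝ} (hP : HasDerivAt P P' x) :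
    HasDerivAt (fun y : ℝ => cexp (a * y) * P y) (cexp (a * x) * (a * P x + P')) x := by
  have he : HasDerivAt (fun y : ℝ => cexp (a * y)) (cexp (a * x) * a) x := by
    simpa using ((hasDerivAt_id x).ofReal_comp.const_mul a).cexp
  exact (he.mul hP).congr_deriv (by ring)

theorem cexp_two_I_mul_conj_eq_one (x : ℝ) :
    cexp (2 * I * x) * conj (cexp (2 * I * x)) = 1 := by
  rw [← exp_conj, ← exp_add]
  simp [map_ofNat]

theorem tanh_sq_add_sech_sq (y : ℝ) : Real.tanh y ^ 2 + sech y ^ 2 = 1 := by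
  have := Real.cosh_sq_sub_sinh_sq y
  have := (Real.cosh_pos y).ne'
  rw [Real.tanh_eq_sinh_div_cosh, sech]
  field_simp
  linarith

theorem hasDerivAt_sech (y : ℝ) : HasDerivAt sech (-(sech y * Real.tanh y)) y := by
  have h := (Real.hasDerivAt_cosh y).inv (Real.cosh_pos y).ne'
  rw [show sech = fun y => (Real.cosh y)⁻¹ from funext fun y => one_div _]
  refine h.congr_deriv ?_
  rw [Real.tanh_eq_sinh_div_cosh]
  field_simp

theorem hasDerivAt_tanh (y : ℝ) : HasDerivAt Real.tanh (sech y ^ 2) y := by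
  have h := (Real.hasDerivAt_sinh y).div (Real.hasDerivAt_cosh y) (Real.cosh_pos y).ne'
  rw [show Real.tanh = fun y => Real.sinh y / Real.cosh y from funext Real.tanh_eq_sinh_div_cosh]
  refine h.congr_deriv ?_
  rw [sech]
  field_simp
  linarith [Real.cosh_sq_sub_sinh_sq y]

noncomputable def kinkSech2 (x : ℝ) : ℝ := sech (x / √2) ^ 2

noncomputable def kinkTanh (x : ℝ) : ℝ := Real.tanh (x / √2)

theorem kinkTanh_sq (x : ℝ) : kinkTanh x ^ 2 = 1 - kinkSech2 x := by
  rw [kinkTanh, kinkSech2, ← tanh_sq_add_sech_sq (x / √2)]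
  ring

theorem hasDerivAt_div_sqrt_two (x : ℝ) : HasDerivAt (fun y : ℝ => y / √2) (1 / √2) x :=
  (hasDerivAt_id x).div_const _

theorem hasDerivAt_kinkTanh (x : ℝ) : HasDerivAt kinkTanh (kinkSech2 x / √2) x := by
  refine ((hasDerivAt_tanh _).comp x (hasDerivAt_div_sqrt_two x)).congr_deriv ?_
  rw [kinkSech2]
  ring

theorem hasDerivAt_kinkSech2 (x : ℝ) :
    HasDerivAt kinkSech2 (-(√2 * kinkSech2 x * kinkTanh x)) x := by
  have h := ((hasDerivAt_sech _).pow 2).comp x (hasDerivAt_div_sqrt_two x)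
  refine h.congr_deriv ?_
  have : (√2) ^ 2 = 2 := Real.sq_sqrt zero_le_two
  rw [kinkSech2, kinkTanh]
  field_simp
  linear_combination (sech (x / √2) ^ 2 * Real.tanh (x / √2)) * this

theorem continuous_kinkSech2 : Continuous kinkSech2 :=
  continuous_iff_continuousAt.2 fun x => (hasDerivAt_kinkSech2 x).continuousAt

theorem sqrt_two_sq_ofReal : ((√2 : ℝ) : ℂ) ^ 2 = 2 := by
  exact_mod_cast Real.sq_sqrt zero_le_two

theorem kJost_eq (x : ℝ) :
    kJost x = cexp (2 * I * x) * (1 + (kinkSech2 x : ℂ) / 2 + I * √2 * (kinkTanh x : ℂ)) := by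
  rw [kJost, kinkSech2, kinkTanh]
  push_cast
  ring

noncomputable def kJostDeriv (x : ℝ) : ℂ :=
  cexp (2 * I * x) *
    ((2 + 2 * (kinkSech2 x : ℂ)) * I - √2 * (kinkTanh x : ℂ) * (2 + (kinkSech2 x : ℂ) / 2))

theorem hasDerivAt_kJost (x : ℝ) : HasDerivAt kJost (kJostDeriv x) x := by
  have hS := (hasDerivAt_kinkSech2 x).ofReal_comp
  have hT := (hasDerivAt_kinkTanh x).ofReal_comp
  have h := (((hS.div_const 2).const_add 1).add (hT.const_mul (I * √2))).cexp_mul (a := 2 * I)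
  rw [show kJost = _ from funext kJost_eq]
  refine h.congr_deriv ?_
  rw [kJostDeriv, Pi.add_apply]
  push_cast
  field_simp
  linear_combination (4 * √2 * (kinkTanh x : ℂ)) * I_sq

theorem hasDerivAt_kJostDeriv (x : ℝ) :
    HasDerivAt kJostDeriv (-((4 + 3 * kinkSech2 x : ℝ) : ℂ) * kJost x) x := by
  have hS := (hasDerivAt_kinkSech2 x).ofReal_comp
  have hT := (hasDerivAt_kinkTanh x).ofReal_comp
  have h := ((((hS.const_mul 2).const_add 2).mul_const I).sub
    ((hT.const_mul (√2 : ℂ)).mul ((hS.div_const 2).const_add 2))).cexp_mul (a := 2 * I)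
  refine h.congr_deriv ?_
  have hT2 : (kinkTanh x : ℂ) ^ 2 = 1 - kinkSech2 x := by exact_mod_cast kinkTanh_sq x
  rw [kJost_eq, Pi.sub_apply, Pi.mul_apply]
  push_cast
  field_simp
  linear_combination (8 + 8 * (kinkSech2 x : ℂ)) * I_sq + 2 * (kinkSech2 x : ℂ) * hT2
    + (kinkSech2 x : ℂ) * (kinkTanh x : ℂ) ^ 2 * sqrt_two_sq_ofReal

theorem kJost_wronskian (x : ℝ) :
    kJostDeriv x * conj (kJost x) - conj (kJostDeriv x) * kJost x = 12 * I := by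
  have hT2 : (kinkTanh x : ℂ) ^ 2 = 1 - kinkSech2 x := by exact_mod_cast kinkTanh_sq x
  rw [kJostDeriv, kJost_eq]
  simp only [map_mul, map_add, map_sub, map_ofNat, map_one, map_div₀, conj_ofReal, conj_I]
  set E := cexp (2 * I * x) * conj (cexp (2 * I * x))
  linear_combination 12 * I * cexp_two_I_mul_conj_eq_one x + E * I * (2 * kinkSech2 x + 8) * hT2
    + E * I * (kinkTanh x : ℂ) ^ 2 * (kinkSech2 x + 4) * sqrt_two_sq_ofReal

theorem norm_kJost_le (x : ℝ) : ‖kJost x‖ ≤ 2 := by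
  have hS : 0 ≤ kinkSech2 x := sq_nonneg _
  have hT2 := kinkTanh_sq x
  have hs2 : √2 ^ 2 = 2 := Real.sq_sqrt zero_le_two
  have he : ‖cexp (2 * I * x)‖ = 1 := by simp [norm_exp]
  have hp : 1 + (kinkSech2 x : ℂ) / 2 + I * √2 * kinkTanh x
      = ((1 + kinkSech2 x / 2 : ℝ) : ℂ) + ((√2 * kinkTanh x : ℝ) : ℂ) * I := by
    push_cast
    ring
  rw [kJost_eq, norm_mul, he, one_mul, hp, norm_add_mul_I, Real.sqrt_le_left zero_le_two,
    mul_pow, hs2]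
  nlinarith [sq_nonneg (kinkTanh x)]

theorem variation_of_parameters_solution
    (F : ℝ → ℝ) (hF : Integrable F) (hF1 : ContDiff ℝ 1 F)
    (G : ℝ → ℝ)
    (hG : ∀ x : ℝ, G x = (1 / 12) *
      (kJost x * (∫ y in Set.Iic x, (starRingEnd ℂ) (kJost y) * (F y : ℂ))
        + (starRingEnd ℂ) (kJost x) * (∫ y in Set.Ici x, kJost y * (F y : ℂ))).im) :
    (∃ M : ℝ, ∀ x : ℝ, |G x| ≤ M) ∧
    ContDiff ℝ 2 G ∧
    (∀ x : ℝ, deriv (deriv G) x + 4 * G x + 3 * sech (x / Real.sqrt 2) ^ 2 * G x = F x) := by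
  obtain ⟨hbounded, hsmooth, hode⟩ :=
    vpIntegral_solves (V := fun x => 4 + 3 * kinkSech2 x) (c := 12) hasDerivAt_kJost
      hasDerivAt_kJostDeriv (fun x => by exact_mod_cast kJost_wronskian x) (by norm_num)
      norm_kJost_le (continuous_const.add (continuous_const.mul continuous_kinkSech2)) hF
      hF1.continuous hG
  refine ⟨hbounded, hsmooth, fun x => ?_⟩
  rw [← hode x, kinkSech2]
  ring
end

section
/- For every λ₀ > 0 and every odd differentiable function w : ℝ → ℝ with w and w' square integrable on ℝ, one has ∫_ℝ w'(x)² dx - (1/λ₀²)·∫_ℝ sech²(x/(λ₀·√2))·w(x)² dx ≥ 0. -/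
/-!
On `(0, ∞)` the function `tanh (x / a)` solves `-φ'' - (2 / a²) sech² (x / a) φ = 0` and vanishes
at `0`, so its logarithmic derivative `ρ` satisfies the Riccati equation
`ρ' + ρ² = -(2 / a²) sech² (x / a)`. Expanding `∫ (w' - ρ w)² ≥ 0` and integrating `(ρ w²)'`
gives `(2 / a²) ∫ sech² (x / a) w² ≤ ∫ w'²` on `(ε, 1 / ε)` up to the boundary term `ρ(ε) w(ε)²`,
which tends to `0` because `ρ(x) ≤ 1 / x` and `w(0) = 0`. An odd `w` vanishes at `0`, so the
inequality holds on both half-lines; with `a = λ₀ √2` it is the claim.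
-/

open MeasureTheory Set Filter Topology intervalIntegral

lemma sech_neg (x : ℝ) : sech (-x) = sech x := by
  rw [sech, sech, Real.cosh_neg]

lemma continuous_sech : Continuous sech :=
  continuous_const.div Real.continuous_cosh fun x => (Real.cosh_pos x).ne'

lemma sech_sq_le_one (x : ℝ) : sech x ^ 2 ≤ 1 := by
  rw [sech, div_pow, one_pow]
  exact div_le_one_of_le₀ (one_le_pow₀ (Real.one_le_cosh x)) (by positivity)

lemma MeasureTheory.Integrable.sech_sq_mul {μ : Measure ℝ} {g : ℝ → ℝ} (hg : Integrable g μ)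
    (a : ℝ) :
    Integrable (fun x => sech (x / a) ^ 2 * g x) μ := by
  refine hg.bdd_mul (c := 1)
    ((continuous_sech.comp (continuous_id.div_const a)).pow 2).aestronglyMeasurable ?_
  filter_upwards with x
  rw [Real.norm_eq_abs, abs_of_nonneg (sq_nonneg _)]
  exact sech_sq_le_one _

lemma MeasureTheory.IntegrableOn.of_sq {f : ℝ → ℝ} {s : Set ℝ} (hs : volume s ≠ ⊤)
    (hf : AEStronglyMeasurable f (volume.restrict s)) (hf2 : IntegrableOn (fun x => f x ^ 2) s) :
    IntegrableOn f s := by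
  have : IsFiniteMeasure (volume.restrict s) := isFiniteMeasure_restrict.2 hs
  exact ((memLp_two_iff_integrable_sq hf).2 hf2).integrable one_le_two

/-- Ground-state substitution: the defect in this inequality is `∫ (w' - ρ w)²`. -/
theorem integral_mul_sq_le_of_riccati {V ρ w w' : ℝ → ℝ} {a b : ℝ} (hab : a ≤ b)
    (hV : ContinuousOn V (Icc a b)) (hρ : ∀ x ∈ Icc a b, HasDerivAt ρ (-V x - ρ x ^ 2) x)
    (hw : ∀ x ∈ Icc a b, HasDerivAt w (w' x) x) (hw' : IntervalIntegrable w' volume a b)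
    (hw'2 : IntervalIntegrable (fun x => w' x ^ 2) volume a b) :
    ∫ x in a..b, V x * w x ^ 2 ≤ (∫ x in a..b, w' x ^ 2) + ρ a * w a ^ 2 - ρ b * w b ^ 2 := by
  rw [← uIcc_of_le hab] at hV hρ hw
  have hρc : ContinuousOn ρ (uIcc a b) := fun x hx => (hρ x hx).continuousAt.continuousWithinAt
  have hwc : ContinuousOn w (uIcc a b) := fun x hx => (hw x hx).continuousAt.continuousWithinAt
  set F' : ℝ → ℝ := fun x => (-V x - ρ x ^ 2) * w x ^ 2 + ρ x * (2 * w x) * w' x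
  have hF : ∀ x ∈ uIcc a b, HasDerivAt (fun y => ρ y * w y ^ 2) (F' x) x := fun x hx => by
    refine ((hρ x hx).mul ((hw x hx).fun_pow 2)).congr_deriv ?_
    push_cast
    ring
  have hF' : IntervalIntegrable F' volume a b :=
    (((hV.neg.sub (hρc.pow 2)).mul (hwc.pow 2)).intervalIntegrable).add
      (hw'.continuousOn_mul (hρc.mul (continuousOn_const.mul hwc)))
  calc ∫ x in a..b, V x * w x ^ 2
      ≤ ∫ x in a..b, (w' x ^ 2 - F' x) := by
        refine integral_mono_on hab (hV.mul (hwc.pow 2)).intervalIntegrable (hw'2.sub hF')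
          fun x _ => ?_
        nlinarith [sq_nonneg (w' x - ρ x * w x)]
    _ = (∫ x in a..b, w' x ^ 2) + ρ a * w a ^ 2 - ρ b * w b ^ 2 := by
        rw [integral_sub hw'2 hF', integral_eq_sub_of_hasDerivAt hF hF']
        ring

lemma tendsto_intervalIntegral_inv_nhdsGT_zero {E : Type*} [NormedAddCommGroup E]
    [NormedSpace ℝ E] {f : ℝ → E} (hf : IntegrableOn f (Ioi 0)) :
    Tendsto (fun ε => ∫ x in ε..ε⁻¹, f x) (𝓝[>] 0) (𝓝 (∫ x in Ioi 0, f x)) := by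
  have hii : ∀ b, 0 ≤ b → IntervalIntegrable f volume 0 b := fun b hb =>
    (intervalIntegrable_iff_integrableOn_Ioc_of_le hb).2 (hf.mono_set Ioc_subset_Ioi_self)
  have hlower : Tendsto (fun ε => ∫ x in (0 : ℝ)..ε, f x) (𝓝[>] 0) (𝓝 0) := by
    have hint : IntegrableOn f (uIcc 0 1) := by
      rw [uIcc_of_le zero_le_one, integrableOn_Icc_iff_integrableOn_Ioc]
      exact hf.mono_set Ioc_subset_Ioi_self
    have hcont := (continuousOn_primitive_interval hint 0 left_mem_uIcc).mono_of_mem_nhdsWithin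
      (by rw [uIcc_of_le zero_le_one]; exact Icc_mem_nhdsGT one_pos)
    simpa using hcont.tendsto
  have hupper := intervalIntegral_tendsto_integral_Ioi 0 hf tendsto_inv_nhdsGT_zero
  refine (sub_zero (∫ x in Ioi 0, f x) ▸ hupper.sub hlower).congr' ?_
  filter_upwards [self_mem_nhdsWithin] with ε (hε : 0 < ε)
  exact integral_interval_sub_left (hii _ (inv_pos.2 hε).le) (hii _ hε.le)

/-- The logarithmic derivative of `x ↦ tanh (x / a)`. -/
noncomputable def tanhLogDeriv (a x : ℝ) : ℝ := 1 / (a * (Real.sinh (x / a) * Real.cosh (x / a)))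

lemma hasDerivAt_tanhLogDeriv {a x : ℝ} (ha : a ≠ 0) (hx : x ≠ 0) :
    HasDerivAt (tanhLogDeriv a) (-(2 / a ^ 2 * sech (x / a) ^ 2) - tanhLogDeriv a x ^ 2) x := by
  have hs : Real.sinh (x / a) ≠ 0 := Real.sinh_ne_zero.2 (div_ne_zero hx ha)
  have hc : Real.cosh (x / a) ≠ 0 := (Real.cosh_pos _).ne'
  have hu : HasDerivAt (fun y => y / a) (1 / a) x := by
    simpa using (hasDerivAt_id x).div_const a
  have hD :=
    (((Real.hasDerivAt_sinh _).comp x hu).mul ((Real.hasDerivAt_cosh _).comp x hu)).const_mul a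
  refine ((hasDerivAt_const x (1 : ℝ)).div hD (by simp [ha, hs, hc])).congr_deriv ?_
  have hcs : Real.cosh (x / a) ^ 2 = 1 + Real.sinh (x / a) ^ 2 := by
    linarith [Real.cosh_sq (x / a)]
  simp only [tanhLogDeriv, sech, Function.comp_def, Pi.mul_apply]
  field_simp
  linear_combination -hcs

lemma tanhLogDeriv_pos {a x : ℝ} (ha : 0 < a) (hx : 0 < x) : 0 < tanhLogDeriv a x := by
  have := Real.sinh_pos_iff.2 (div_pos hx ha)
  have := Real.cosh_pos (x / a)
  unfold tanhLogDeriv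
  positivity

lemma tanhLogDeriv_le_inv {a x : ℝ} (ha : 0 < a) (hx : 0 < x) : tanhLogDeriv a x ≤ x⁻¹ := by
  have hsinh : x / a ≤ Real.sinh (x / a) := Real.self_le_sinh_iff.2 (div_pos hx ha).le
  have hprod : x ≤ a * (Real.sinh (x / a) * Real.cosh (x / a)) := by
    calc x = a * (x / a * 1) := by field_simp
      _ ≤ a * (Real.sinh (x / a) * Real.cosh (x / a)) :=
        mul_le_mul_of_nonneg_left (mul_le_mul hsinh (Real.one_le_cosh _) zero_le_one
          ((div_pos hx ha).le.trans hsinh)) ha.le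
  rw [← one_div]
  exact one_div_le_one_div_of_le hx hprod

lemma tendsto_tanhLogDeriv_mul_sq {a w' : ℝ} {w : ℝ → ℝ} (ha : 0 < a) (hw : HasDerivAt w w' 0)
    (hw0 : w 0 = 0) :
    Tendsto (fun x => tanhLogDeriv a x * w x ^ 2) (𝓝[>] 0) (𝓝 0) := by
  have hslope : Tendsto (fun x => x⁻¹ * w x) (𝓝[>] 0) (𝓝 w') := by
    simpa [hw0] using hw.tendsto_slope_zero.mono_left (nhdsGT_le_nhdsNE 0)
  have hval : Tendsto w (𝓝[>] 0) (𝓝 0) := by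
    simpa [hw0] using hw.continuousAt.tendsto.mono_left (nhdsWithin_le_nhds (s := Ioi 0))
  have hbound : Tendsto (fun x => x⁻¹ * w x * w x) (𝓝[>] 0) (𝓝 0) := by
    simpa using hslope.mul hval
  refine tendsto_of_tendsto_of_tendsto_of_le_of_le' tendsto_const_nhds hbound ?_ ?_
  all_goals filter_upwards [self_mem_nhdsWithin] with x (hx : 0 < x)
  · exact mul_nonneg (tanhLogDeriv_pos ha hx).le (sq_nonneg _)
  · rw [mul_assoc, ← sq]
    exact mul_le_mul_of_nonneg_right (tanhLogDeriv_le_inv ha hx) (sq_nonneg _)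

theorem sech_sq_integral_Ioi_le {a : ℝ} (ha : 0 < a) {w : ℝ → ℝ} (hw : Differentiable ℝ w)
    (hw0 : w 0 = 0) (hw2 : IntegrableOn (fun x => w x ^ 2) (Ioi 0))
    (hw'2 : IntegrableOn (fun x => deriv w x ^ 2) (Ioi 0)) :
    2 / a ^ 2 * ∫ x in Ioi 0, sech (x / a) ^ 2 * w x ^ 2 ≤ ∫ x in Ioi 0, deriv w x ^ 2 := by
  have hV : Continuous fun x => 2 / a ^ 2 * sech (x / a) ^ 2 :=
    continuous_const.mul ((continuous_sech.comp (continuous_id.div_const a)).pow 2)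
  have hbound : ∀ᶠ ε in 𝓝[>] 0, 2 / a ^ 2 * ∫ x in ε..ε⁻¹, sech (x / a) ^ 2 * w x ^ 2
      ≤ (∫ x in Ioi 0, deriv w x ^ 2) + tanhLogDeriv a ε * w ε ^ 2 := by
    filter_upwards [Ioo_mem_nhdsGT one_pos] with ε ⟨hε, hε1⟩
    have hεR : ε ≤ ε⁻¹ := le_trans hε1.le (one_le_inv₀ hε |>.2 hε1.le)
    have hIoc : Ioc ε ε⁻¹ ⊆ Ioi 0 := fun x hx => hε.trans hx.1
    have hw'2I : IntervalIntegrable (fun x => deriv w x ^ 2) volume ε ε⁻¹ :=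
      (intervalIntegrable_iff_integrableOn_Ioc_of_le hεR).2 (hw'2.mono_set hIoc)
    have hw'I : IntervalIntegrable (deriv w) volume ε ε⁻¹ :=
      (intervalIntegrable_iff_integrableOn_Ioc_of_le hεR).2 <|
        IntegrableOn.of_sq measure_Ioc_lt_top.ne (measurable_deriv w).aestronglyMeasurable
          (hw'2.mono_set hIoc)
    have hriccati := integral_mul_sq_le_of_riccati hεR hV.continuousOn
      (fun x hx => hasDerivAt_tanhLogDeriv ha.ne' (hε.trans_le hx.1).ne')
      (fun x _ => (hw x).hasDerivAt) hw'I hw'2I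
    have hmono : ∫ x in ε..ε⁻¹, deriv w x ^ 2 ≤ ∫ x in Ioi 0, deriv w x ^ 2 := by
      rw [integral_of_le hεR]
      exact setIntegral_mono_set hw'2 (Eventually.of_forall fun x => sq_nonneg _)
        hIoc.eventuallyLE
    have hright : 0 ≤ tanhLogDeriv a ε⁻¹ * w ε⁻¹ ^ 2 :=
      mul_nonneg (tanhLogDeriv_pos ha (inv_pos.2 hε)).le (sq_nonneg _)
    simp only [mul_assoc] at hriccati
    rw [intervalIntegral.integral_const_mul] at hriccati
    linarith
  refine le_of_tendsto_of_tendsto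
    ((tendsto_intervalIntegral_inv_nhdsGT_zero (hw2.sech_sq_mul a)).const_mul _) ?_ hbound
  simpa using tendsto_const_nhds.add (tendsto_tanhLogDeriv_mul_sq ha (hw 0).hasDerivAt hw0)

theorem sech_sq_integral_le {a : ℝ} (ha : 0 < a) {w : ℝ → ℝ} (hw : Differentiable ℝ w)
    (hw0 : w 0 = 0) (hw2 : Integrable fun x => w x ^ 2)
    (hw'2 : Integrable fun x => deriv w x ^ 2) :
    2 / a ^ 2 * ∫ x, sech (x / a) ^ 2 * w x ^ 2 ≤ ∫ x, deriv w x ^ 2 := by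
  have hright := sech_sq_integral_Ioi_le ha hw hw0 hw2.integrableOn hw'2.integrableOn
  have hleft := sech_sq_integral_Ioi_le ha (w := fun x => w (-x)) (hw.comp differentiable_neg)
    (by simpa using hw0) hw2.comp_neg.integrableOn
    (by simpa only [deriv_comp_neg, neg_sq] using hw'2.comp_neg.integrableOn)
  have hreflect : ∀ g : ℝ → ℝ, ∫ x in Ioi 0, g (-x) = ∫ x in Iic 0, g x := fun g => by
    rw [integral_comp_neg_Ioi, neg_zero]
  have hleft' : 2 / a ^ 2 * ∫ x in Iic 0, sech (x / a) ^ 2 * w x ^ 2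
      ≤ ∫ x in Iic 0, deriv w x ^ 2 := by
    rw [← hreflect, ← hreflect]
    simpa only [deriv_comp_neg, neg_sq, neg_div, sech_neg] using hleft
  have hVw2 := hw2.sech_sq_mul a
  rw [← integral_Iic_add_Ioi hVw2.integrableOn hVw2.integrableOn,
    ← integral_Iic_add_Ioi hw'2.integrableOn hw'2.integrableOn, mul_add]
  exact add_le_add hleft' hright

theorem nonnegativity_on_odd_functions
    (lam : ℝ) (hlam : lam > 0)
    (w : ℝ → ℝ) (hodd : ∀ x : ℝ, w (-x) = -w x)
    (hdiff : Differentiable ℝ w)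
    (hw2 : Integrable (fun x => (w x) ^ 2))
    (hw'2 : Integrable (fun x => (deriv w x) ^ 2)) :
    (∫ x : ℝ, (deriv w x) ^ 2)
      - (1 / lam ^ 2) * (∫ x : ℝ, sech (x / (lam * Real.sqrt 2)) ^ 2 * (w x) ^ 2) ≥ 0 := by
  have ha : 0 < lam * Real.sqrt 2 := mul_pos hlam (by positivity)
  have hw0 : w 0 = 0 := by
    have h := hodd 0
    rw [neg_zero] at h
    linarith
  have hconst : 2 / (lam * Real.sqrt 2) ^ 2 = 1 / lam ^ 2 := by
    rw [mul_pow, Real.sq_sqrt zero_le_two]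
    field_simp
  have hineq := sech_sq_integral_le ha hdiff hw0 hw2 hw'2
  rw [hconst] at hineq
  linarith
end
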